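/- Let Q, X₁₁, X₂₁, X₃₁ be finite-valued random variables such that X₁₁, X₂₁, X₃₁ are mutually conditionally independent given Q. Let S₁ = h(X₂₁, X₃₁) where h is one-to-one in each argument, and let Y₁ = f(X₁₁, S₁) where f is one-to-one in each argument. Then H(Y₁|X₂₁,Q) − H(X₃₁|Q) ≥ H(Y₁|Q) − H(S₁|Q); equivalently, H(X₂₁|Y₁,Q) ≥ H(X₂₁|S₁,Q). -/

import Mathlib

open scoped Classical
open Finset

/-- A probability mass function on a finite sample space, given as a real-valued
weight function that is nonnegative and sums to one. -/
structure FinPMF (Ω : Type) where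
  [fin : Fintype Ω]
  p : Ω → ℝ
  nonneg : ∀ ω, 0 ≤ p ω
  sum_one : ∑ ω, p ω = 1

/-- Probability of an event. -/
noncomputable def prE {Ω : Type} (μ : FinPMF Ω) (E : Ω → Prop) : ℝ :=
  letI := μ.fin
  ∑ ω, if E ω then μ.p ω else 0

/-- Probability that the random variable `X` takes the value `x`. -/
noncomputable def prX {Ω α : Type} (μ : FinPMF Ω) (X : Ω → α) (x : α) : ℝ :=
  prE μ (fun ω => X ω = x)

/-- Shannon entropy (base 2) of a random variable on a finite probability space. -/
noncomputable def entH {Ω α : Type} (μ : FinPMF Ω) (X : Ω → α) : ℝ :=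
  letI := μ.fin;
  -∑ x ∈ Finset.univ.image X, prX μ X x * Real.logb 2 (prX μ X x)

/-- Conditional entropy `H(X | Y)` (base 2). -/
noncomputable def condH {Ω α β : Type} (μ : FinPMF Ω) (X : Ω → α) (Y : Ω → β) : ℝ :=
  entH μ (fun ω => (X ω, Y ω)) - entH μ Y

/-- Conditional mutual information `I(X ; Y | Q)` (base 2). -/
noncomputable def condMI {Ω α β γ : Type} (μ : FinPMF Ω) (X : Ω → α) (Y : Ω → β)
    (Q : Ω → γ) : ℝ :=
  condH μ X Q + condH μ Y Q - condH μ (fun ω => (X ω, Y ω)) Q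

/-- A two-argument function is one-to-one in each argument. -/
def OneToOne {A B C : Type} (f : A → B → C) : Prop :=
  (∀ b, Function.Injective fun a => f a b) ∧ ∀ a, Function.Injective (f a)

/-- Conditional pmf `p_{X|U}(x|u)`. -/
noncomputable def condP {Ω α γ : Type} (μ : FinPMF Ω) (X : Ω → α) (U : Ω → γ)
    (x : α) (u : γ) : ℝ :=
  prE μ (fun ω => X ω = x ∧ U ω = u) / prX μ U u

/-- Independence of two random variables. -/
def IndepFun {Ω α β : Type} (μ : FinPMF Ω) (X : Ω → α) (S : Ω → β) : Prop :=
  ∀ x s, prE μ (fun ω => X ω = x ∧ S ω = s) = prX μ X x * prX μ S s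

/-- Conditional independence of `A` and `B` given `Z`:
for every `z` with `P(Z = z) > 0`, `P(A = a, B = b | Z = z) = P(A = a | Z = z) P(B = b | Z = z)`. -/
def CondIndepFun {Ω α β γ : Type} (μ : FinPMF Ω) (A : Ω → α) (B : Ω → β) (Z : Ω → γ) : Prop :=
  ∀ a b z, 0 < prX μ Z z →
    prE μ (fun ω => A ω = a ∧ B ω = b ∧ Z ω = z) / prX μ Z z =
      (prE μ (fun ω => A ω = a ∧ Z ω = z) / prX μ Z z) *
        (prE μ (fun ω => B ω = b ∧ Z ω = z) / prX μ Z z)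

/-- Mutual conditional independence of `X₁, X₂, X₃` given `Q`: the joint conditional pmf
factors into the product of the conditional marginals. -/
def CondIndepFun3 {Ω α₁ α₂ α₃ γ : Type} (μ : FinPMF Ω)
    (X₁ : Ω → α₁) (X₂ : Ω → α₂) (X₃ : Ω → α₃) (Q : Ω → γ) : Prop :=
  ∀ x₁ x₂ x₃ q, 0 < prX μ Q q →
    prE μ (fun ω => X₁ ω = x₁ ∧ X₂ ω = x₂ ∧ X₃ ω = x₃ ∧ Q ω = q) / prX μ Q q =
      (prE μ (fun ω => X₁ ω = x₁ ∧ Q ω = q) / prX μ Q q) *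
        (prE μ (fun ω => X₂ ω = x₂ ∧ Q ω = q) / prX μ Q q) *
        (prE μ (fun ω => X₃ ω = x₃ ∧ Q ω = q) / prX μ Q q)

/-- The ε-typical set (sequences whose empirical pmf is within a relative ε of `p`). -/
def Typical {𝒳 : Type} [Fintype 𝒳] (p : 𝒳 → ℝ) (ε : ℝ) (n : ℕ) (xs : Fin n → 𝒳) : Prop :=
  ∀ x : 𝒳, |((Finset.univ.filter fun i => xs i = x).card : ℝ) / n - p x| ≤ ε * p x

/-- The number of codewords `⌈2^{nR}⌉` at rate `R` and blocklength `n`. -/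
noncomputable def codeSize (R : ℝ) (n : ℕ) : ℕ := ⌈(2 : ℝ) ^ ((n : ℝ) * R)⌉₊

/-!
Put `S = h(X₂₁, X₃₁)` and `Y₁ = f(X₁₁, S)`. As `f` and `h` are one-to-one in each argument,
`(S, Y₁)` carries the same information as `(X₁₁, S)`, `(X₂₁, S)` the same as `(X₂₁, X₃₁)`, and
`(X₂₁, S, Y₁)` the same as `(X₁₁, X₂₁, X₃₁)`. Conditional independence gives
`I(X₁₁ ; X₂₁X₃₁ | Q) = I(X₁₁ ; S | Q) = I(X₂₁ ; X₃₁ | Q) = 0`, and with these identities both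
claims become `I(X₂₁ ; S | Y₁, Q) ≥ 0`.

Entropies are expectations of the surprisal `-log₂ P(X = X(ω))`, so
`I(A ; B | C) = -E[log₂ r]` for `r = p(a,c) p(b,c) / (p(a,b,c) p(c))`. Conditional independence
means `r = 1`; in general `E[r] ≤ 1`, and `log x ≤ x - 1` then gives `I(A ; B | C) ≥ 0`.
-/

namespace FinPMF

variable {Ω : Type} (μ : FinPMF Ω)

noncomputable def expect (g : Ω → ℝ) : ℝ :=
  letI := μ.fin
  ∑ ω, μ.p ω * g ω

noncomputable def range {α : Type} (X : Ω → α) : Finset α :=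
  letI := μ.fin
  univ.image X

variable {μ}

lemma mem_range {α : Type} {X : Ω → α} {x : α} : x ∈ μ.range X ↔ ∃ ω, X ω = x := by
  let _ := μ.fin
  simp [range]

lemma expect_add (g g' : Ω → ℝ) : μ.expect (g + g') = μ.expect g + μ.expect g' := by
  let _ := μ.fin
  simp only [expect, Pi.add_apply, mul_add, sum_add_distrib]

lemma expect_sub (g g' : Ω → ℝ) : μ.expect (g - g') = μ.expect g - μ.expect g' := by
  let _ := μ.fin
  simp only [expect, Pi.sub_apply, mul_sub, sum_sub_distrib]

lemma expect_neg (g : Ω → ℝ) : μ.expect (fun ω => -g ω) = -μ.expect g := by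
  let _ := μ.fin
  simp only [expect, mul_neg, sum_neg_distrib]

lemma expect_const (c : ℝ) : μ.expect (fun _ => c) = c := by
  let _ := μ.fin
  simp only [expect, ← sum_mul, μ.sum_one, one_mul]

lemma expect_mono {g g' : Ω → ℝ} (h : ∀ ω, 0 < μ.p ω → g ω ≤ g' ω) :
    μ.expect g ≤ μ.expect g' := by
  let _ := μ.fin
  refine sum_le_sum fun ω _ => ?_
  rcases (μ.nonneg ω).eq_or_lt with h0 | h0
  · simp [← h0]
  · exact mul_le_mul_of_nonneg_left (h ω h0) h0.le

lemma expect_congr {g g' : Ω → ℝ} (h : ∀ ω, 0 < μ.p ω → g ω = g' ω) :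
    μ.expect g = μ.expect g' :=
  (expect_mono fun ω hω => (h ω hω).le).antisymm (expect_mono fun ω hω => (h ω hω).ge)

lemma expect_logb_nonpos {r : Ω → ℝ} (hr : ∀ ω, 0 < μ.p ω → 0 < r ω)
    (h : μ.expect r ≤ 1) : μ.expect (fun ω => Real.logb 2 (r ω)) ≤ 0 := by
  have hlog2 : 0 < Real.log 2 := Real.log_pos one_lt_two
  calc μ.expect (fun ω => Real.logb 2 (r ω))
      ≤ μ.expect (fun ω => (r ω - 1) / Real.log 2) := expect_mono fun ω hω =>
        div_le_div_of_nonneg_right (Real.log_le_sub_one_of_pos (hr ω hω)) hlog2.le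
    _ = (μ.expect r - 1) / Real.log 2 := by
        let _ := μ.fin
        simp only [expect, mul_div_assoc', ← sum_div, mul_sub, mul_one, sum_sub_distrib, μ.sum_one]
    _ ≤ 0 := div_nonpos_of_nonpos_of_nonneg (by linarith) hlog2.le

end FinPMF

section Probability

variable {Ω α : Type} {μ : FinPMF Ω}

lemma prE_mono {E F : Ω → Prop} (h : ∀ ω, E ω → F ω) : prE μ E ≤ prE μ F := by
  let _ := μ.fin
  refine sum_le_sum fun ω _ => ?_
  by_cases hE : E ω
  · simp [hE, h ω hE]
  · simp only [hE, if_false]; split_ifs <;> simp [μ.nonneg ω]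

lemma prE_nonneg (E : Ω → Prop) : 0 ≤ prE μ E := by
  simpa [prE] using prE_mono (μ := μ) (E := fun _ => False) (F := E) (by simp)

lemma prE_congr {E F : Ω → Prop} (h : ∀ ω, E ω ↔ F ω) : prE μ E = prE μ F :=
  (prE_mono fun ω => (h ω).1).antisymm (prE_mono fun ω => (h ω).2)

lemma sum_range_prE_and (X : Ω → α) (E : Ω → Prop) :
    ∑ x ∈ μ.range X, prE μ (fun ω => X ω = x ∧ E ω) = prE μ E := by
  let _ := μ.fin
  simp only [prE, FinPMF.range]
  rw [sum_comm]
  refine sum_congr rfl fun ω _ => ?_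
  by_cases hE : E ω <;> simp [hE]

lemma sum_range_prX_mul (X : Ω → α) (g : α → ℝ) :
    ∑ x ∈ μ.range X, prX μ X x * g x = μ.expect (fun ω => g (X ω)) := by
  let _ := μ.fin
  simp only [prX, prE, FinPMF.range, FinPMF.expect, sum_mul, ite_mul, zero_mul]
  rw [sum_comm]
  refine sum_congr rfl fun ω _ => ?_
  rw [sum_ite_eq]
  simp

lemma p_le_prE {E : Ω → Prop} {ω : Ω} (hE : E ω) : μ.p ω ≤ prE μ E := by
  let _ := μ.fin
  show _ ≤ ∑ ω', if E ω' then μ.p ω' else 0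
  simpa [hE] using single_le_sum (f := fun ω => if E ω then μ.p ω else 0)
    (fun ω _ => by split_ifs <;> simp [μ.nonneg ω]) (mem_univ ω)

lemma prE_pos {E : Ω → Prop} {ω : Ω} (hω : 0 < μ.p ω) (hE : E ω) : 0 < prE μ E :=
  hω.trans_le (p_le_prE hE)

lemma prE_eq_zero {E : Ω → Prop} (h : ∀ ω, ¬E ω) : prE μ E = 0 := by
  let _ := μ.fin
  simp [prE, h]

lemma expect_div_prX_le {X : Ω → α} {T : α → ℝ} (hT : ∀ x, 0 ≤ T x) :
    μ.expect (fun ω => T (X ω) / prX μ X (X ω)) ≤ ∑ x ∈ μ.range X, T x := by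
  rw [← sum_range_prX_mul X fun x => T x / prX μ X x]
  refine sum_le_sum fun x _ => ?_
  rcases (prE_nonneg (μ := μ) fun ω => X ω = x).eq_or_lt with h0 | h0
  · rw [prX, ← h0, zero_mul]; exact hT x
  · rw [mul_div_cancel₀ _ (show prX μ X x ≠ 0 from h0.ne')]

end Probability

section Entropy

variable {Ω α β : Type} {μ : FinPMF Ω}

variable (μ) in
noncomputable def surprisal (X : Ω → α) (ω : Ω) : ℝ :=
  -Real.logb 2 (prX μ X (X ω))

lemma entH_eq_expect (X : Ω → α) : entH μ X = μ.expect (surprisal μ X) := by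
  show _ = μ.expect fun ω => -Real.logb 2 (prX μ X (X ω))
  rw [← sum_range_prX_mul X fun x => -Real.logb 2 (prX μ X x)]
  simp only [entH, FinPMF.range, mul_neg, sum_neg_distrib]

lemma entH_congr {X : Ω → α} {Y : Ω → β} (h : ∀ ω ω', X ω' = X ω ↔ Y ω' = Y ω) :
    entH μ X = entH μ Y := by
  rw [entH_eq_expect, entH_eq_expect]
  congr 1
  funext ω
  simp only [surprisal, prX, prE_congr (h ω)]

end Entropy

section CondMutualInfo

variable {Ω α β γ : Type} {μ : FinPMF Ω} {A : Ω → α} {B : Ω → β} {C : Ω → γ}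

variable (μ A B C) in
noncomputable def condIndepRatio (ω : Ω) : ℝ :=
  prE μ (fun ω' => A ω' = A ω ∧ C ω' = C ω) * prE μ (fun ω' => B ω' = B ω ∧ C ω' = C ω) /
    (prE μ (fun ω' => A ω' = A ω ∧ B ω' = B ω ∧ C ω' = C ω) * prX μ C (C ω))

lemma condIndepRatio_pos {ω : Ω} (hω : 0 < μ.p ω) : 0 < condIndepRatio μ A B C ω :=
  div_pos (mul_pos (prE_pos hω ⟨rfl, rfl⟩) (prE_pos hω ⟨rfl, rfl⟩))
    (mul_pos (prE_pos hω ⟨rfl, rfl, rfl⟩) (prE_pos hω rfl))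

lemma surprisal_triple (ω : Ω) :
    surprisal μ (fun ω => ((A ω, B ω), C ω)) ω =
      -Real.logb 2 (prE μ fun ω' => A ω' = A ω ∧ B ω' = B ω ∧ C ω' = C ω) := by
  simp only [surprisal, prX, Prod.mk.injEq, and_assoc]

lemma surprisal_pair (ω : Ω) :
    surprisal μ (fun ω => (A ω, C ω)) ω =
      -Real.logb 2 (prE μ fun ω' => A ω' = A ω ∧ C ω' = C ω) := by
  simp only [surprisal, prX, Prod.mk.injEq]

lemma condMI_eq_neg_expect_logb_condIndepRatio :
    condMI μ A B C = -μ.expect fun ω => Real.logb 2 (condIndepRatio μ A B C ω) := by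
  calc condMI μ A B C
      = μ.expect (surprisal μ (fun ω => (A ω, C ω)) + surprisal μ (fun ω => (B ω, C ω)) -
          surprisal μ (fun ω => ((A ω, B ω), C ω)) - surprisal μ C) := by
        simp only [FinPMF.expect_sub, FinPMF.expect_add, condMI, condH, entH_eq_expect]
        ring
    _ = μ.expect fun ω => -Real.logb 2 (condIndepRatio μ A B C ω) :=
      FinPMF.expect_congr fun ω hω => by
        have hC : 0 < prX μ C (C ω) := prE_pos hω rfl
        have hAC : 0 < prE μ fun ω' => A ω' = A ω ∧ C ω' = C ω := prE_pos hω ⟨rfl, rfl⟩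
        have hBC : 0 < prE μ fun ω' => B ω' = B ω ∧ C ω' = C ω := prE_pos hω ⟨rfl, rfl⟩
        have hABC : 0 < prE μ fun ω' => A ω' = A ω ∧ B ω' = B ω ∧ C ω' = C ω :=
          prE_pos hω ⟨rfl, rfl, rfl⟩
        rw [Pi.sub_apply, Pi.sub_apply, Pi.add_apply, surprisal_triple, surprisal_pair,
          surprisal_pair, condIndepRatio, Real.logb_div (mul_pos hAC hBC).ne' (mul_pos hABC hC).ne',
          Real.logb_mul hAC.ne' hBC.ne', Real.logb_mul hABC.ne' hC.ne', surprisal]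
        ring
    _ = _ := FinPMF.expect_neg _

lemma expect_condIndepRatio_le_one : μ.expect (condIndepRatio μ A B C) ≤ 1 := by
  let T : (α × γ) × β → ℝ := fun y =>
    prX μ (fun ω => (A ω, C ω)) y.1 * prE μ (fun ω => B ω = y.2 ∧ C ω = y.1.2) / prX μ C y.1.2
  have hT : ∀ y, 0 ≤ T y := fun y =>
    div_nonneg (mul_nonneg (prE_nonneg _) (prE_nonneg _)) (prE_nonneg _)
  have hr : condIndepRatio μ A B C = fun ω =>
      T ((A ω, C ω), B ω) / prX μ (fun ω => ((A ω, C ω), B ω)) ((A ω, C ω), B ω) := by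
    funext ω
    have hABC : prX μ (fun ω => ((A ω, C ω), B ω)) ((A ω, C ω), B ω) =
        prE μ fun ω' => A ω' = A ω ∧ B ω' = B ω ∧ C ω' = C ω :=
      prE_congr fun ω' => by simp only [Prod.mk.injEq]; tauto
    rw [condIndepRatio, hABC, mul_comm (prE μ _) (prX μ C _), ← div_div]
    simp only [T, prX, Prod.mk.injEq]
  have hsub : μ.range (fun ω => ((A ω, C ω), B ω)) ⊆
      μ.range (fun ω => (A ω, C ω)) ×ˢ μ.range B := by
    intro y hy
    obtain ⟨ω, rfl⟩ := FinPMF.mem_range.1 hy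
    exact mem_product.2 ⟨FinPMF.mem_range.2 ⟨ω, rfl⟩, FinPMF.mem_range.2 ⟨ω, rfl⟩⟩
  calc μ.expect (condIndepRatio μ A B C)
      ≤ ∑ y ∈ μ.range (fun ω => ((A ω, C ω), B ω)), T y := hr ▸ expect_div_prX_le hT
    _ ≤ ∑ y ∈ μ.range (fun ω => (A ω, C ω)) ×ˢ μ.range B, T y :=
        sum_le_sum_of_subset_of_nonneg hsub fun y _ _ => hT y
    _ = ∑ ac ∈ μ.range (fun ω => (A ω, C ω)),
          prX μ (fun ω => (A ω, C ω)) ac * (prX μ C ac.2 / prX μ C ac.2) := by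
        rw [sum_product]
        refine sum_congr rfl fun ac _ => ?_
        simp only [T, mul_div_assoc, ← mul_sum, ← sum_div, sum_range_prE_and]
        rfl
    _ ≤ ∑ ac ∈ μ.range (fun ω => (A ω, C ω)), prX μ (fun ω => (A ω, C ω)) ac * 1 :=
        sum_le_sum fun ac _ => mul_le_mul_of_nonneg_left (div_self_le_one _) (prE_nonneg _)
    _ = 1 := by rw [sum_range_prX_mul, FinPMF.expect_const]

lemma condMI_nonneg : 0 ≤ condMI μ A B C := by
  rw [condMI_eq_neg_expect_logb_condIndepRatio, neg_nonneg]
  exact FinPMF.expect_logb_nonpos (fun _ hω => condIndepRatio_pos hω) expect_condIndepRatio_le_one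

lemma condIndepRatio_eq_one (h : CondIndepFun μ A B C) {ω : Ω} (hω : 0 < μ.p ω) :
    condIndepRatio μ A B C ω = 1 := by
  have hC : 0 < prX μ C (C ω) := prE_pos hω rfl
  have hABC : 0 < prE μ fun ω' => A ω' = A ω ∧ B ω' = B ω ∧ C ω' = C ω :=
    prE_pos hω ⟨rfl, rfl, rfl⟩
  have hfac := h (A ω) (B ω) (C ω) hC
  rw [condIndepRatio, div_eq_one_iff_eq (mul_pos hABC hC).ne']
  field_simp at hfac
  linear_combination -hfac

lemma condMI_eq_zero_of_condIndepFun (h : CondIndepFun μ A B C) : condMI μ A B C = 0 := by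
  rw [condMI_eq_neg_expect_logb_condIndepRatio, neg_eq_zero, ← FinPMF.expect_const (μ := μ) 0]
  exact FinPMF.expect_congr fun ω hω => by rw [condIndepRatio_eq_one h hω, Real.logb_one]

end CondMutualInfo

section CondIndep

variable {Ω α β γ δ : Type} {μ : FinPMF Ω}

lemma condIndepFun_iff_mul {A : Ω → α} {B : Ω → β} {C : Ω → γ} :
    CondIndepFun μ A B C ↔ ∀ a b c, 0 < prX μ C c →
      prE μ (fun ω => A ω = a ∧ B ω = b ∧ C ω = c) * prX μ C c =
        prE μ (fun ω => A ω = a ∧ C ω = c) * prE μ (fun ω => B ω = b ∧ C ω = c) := by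
  refine forall₃_congr fun a b c => imp_congr_right fun hc => ?_
  rw [div_mul_div_comm, div_eq_div_iff hc.ne' (mul_pos hc hc).ne']
  exact ⟨fun e => mul_right_cancel₀ hc.ne' (by linear_combination e),
    fun e => by linear_combination prX μ C c * e⟩

lemma prE_comp_eq_sum_range (B : Ω → β) (g : β → δ) (s : δ) (E : Ω → Prop) :
    prE μ (fun ω => g (B ω) = s ∧ E ω) =
      ∑ b ∈ μ.range B, if g b = s then prE μ (fun ω => B ω = b ∧ E ω) else 0 := by
  rw [← sum_range_prE_and B]
  refine sum_congr rfl fun b _ => ?_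
  split_ifs with hb
  · exact prE_congr fun ω => by constructor <;> rintro ⟨rfl, h⟩ <;> simp_all
  · exact prE_eq_zero fun ω ⟨hB, hg, _⟩ => hb (hB ▸ hg)

lemma CondIndepFun.comp_right {A : Ω → α} {B : Ω → β} {C : Ω → γ}
    (h : CondIndepFun μ A B C) (g : β → δ) : CondIndepFun μ A (fun ω => g (B ω)) C := by
  rw [condIndepFun_iff_mul] at h ⊢
  intro a s c hc
  have hAgB : prE μ (fun ω => A ω = a ∧ g (B ω) = s ∧ C ω = c) =
      ∑ b ∈ μ.range B, if g b = s then prE μ (fun ω => A ω = a ∧ B ω = b ∧ C ω = c) else 0 := by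
    rw [prE_congr fun ω => and_left_comm, prE_comp_eq_sum_range]
    simp only [and_left_comm]
  rw [hAgB, prE_comp_eq_sum_range B g s fun ω => C ω = c, sum_mul, mul_sum]
  refine sum_congr rfl fun b _ => ?_
  split_ifs
  · exact h a b c hc
  · simp

end CondIndep

section CondIndep3

variable {Ω α₁ α₂ α₃ γ : Type} {μ : FinPMF Ω}
  {X₁ : Ω → α₁} {X₂ : Ω → α₂} {X₃ : Ω → α₃} {Q : Ω → γ}

lemma CondIndepFun3.mul_eq (h : CondIndepFun3 μ X₁ X₂ X₃ Q) (x₁ : α₁) (x₂ : α₂) (x₃ : α₃)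
    {q : γ} (hq : 0 < prX μ Q q) :
    prE μ (fun ω => X₁ ω = x₁ ∧ X₂ ω = x₂ ∧ X₃ ω = x₃ ∧ Q ω = q) * prX μ Q q ^ 2 =
      prE μ (fun ω => X₁ ω = x₁ ∧ Q ω = q) * prE μ (fun ω => X₂ ω = x₂ ∧ Q ω = q) *
        prE μ (fun ω => X₃ ω = x₃ ∧ Q ω = q) := by
  have := h x₁ x₂ x₃ q hq
  field_simp at this
  linear_combination this

lemma CondIndepFun3.condIndepFun₂₃ (h : CondIndepFun3 μ X₁ X₂ X₃ Q) :
    CondIndepFun μ X₂ X₃ Q := by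
  refine condIndepFun_iff_mul.2 fun x₂ x₃ q hq => mul_left_cancel₀ hq.ne' ?_
  calc prX μ Q q * (prE μ (fun ω => X₂ ω = x₂ ∧ X₃ ω = x₃ ∧ Q ω = q) * prX μ Q q)
      = ∑ x₁ ∈ μ.range X₁,
          prE μ (fun ω => X₁ ω = x₁ ∧ X₂ ω = x₂ ∧ X₃ ω = x₃ ∧ Q ω = q) * prX μ Q q ^ 2 := by
        rw [← sum_mul, sum_range_prE_and]; ring
    _ = ∑ x₁ ∈ μ.range X₁, prE μ (fun ω => X₁ ω = x₁ ∧ Q ω = q) *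
          (prE μ (fun ω => X₂ ω = x₂ ∧ Q ω = q) * prE μ (fun ω => X₃ ω = x₃ ∧ Q ω = q)) :=
        sum_congr rfl fun x₁ _ => by rw [h.mul_eq x₁ x₂ x₃ hq]; ring
    _ = _ := by rw [← sum_mul, sum_range_prE_and]; rfl

lemma CondIndepFun3.condIndepFun₁_prod (h : CondIndepFun3 μ X₁ X₂ X₃ Q) :
    CondIndepFun μ X₁ (fun ω => (X₂ ω, X₃ ω)) Q := by
  refine condIndepFun_iff_mul.2 fun x₁ ⟨x₂, x₃⟩ q hq => mul_left_cancel₀ hq.ne' ?_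
  have h₂₃ := condIndepFun_iff_mul.1 h.condIndepFun₂₃ x₂ x₃ q hq
  simp only [Prod.mk.injEq, and_assoc]
  linear_combination h.mul_eq x₁ x₂ x₃ hq - prE μ (fun ω => X₁ ω = x₁ ∧ Q ω = q) * h₂₃

end CondIndep3

lemma OneToOne.eq_of_eq_left {A B C : Type} {f : A → B → C} (hf : OneToOne f) {a a' : A}
    {b b' : B} (ha : a' = a) (h : f a' b' = f a b) : b' = b :=
  hf.2 a (ha ▸ h)

lemma OneToOne.eq_of_eq_right {A B C : Type} {f : A → B → C} (hf : OneToOne f) {a a' : A}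
    {b b' : B} (hb : b' = b) (h : f a' b' = f a b) : a' = a :=
  hf.1 b (hb ▸ h)

theorem third_term_ge_last_general
    {Ω 𝒬 𝒜 ℬ 𝒞 𝒮 𝒴 : Type}
    (μ : FinPMF Ω) (Q : Ω → 𝒬) (X₁₁ : Ω → 𝒜) (X₂₁ : Ω → ℬ) (X₃₁ : Ω → 𝒞)
    (h : ℬ → 𝒞 → 𝒮) (f : 𝒜 → 𝒮 → 𝒴)
    (hindep : CondIndepFun3 μ X₁₁ X₂₁ X₃₁ Q)
    (hh : OneToOne h) (hf : OneToOne f) :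
    (condH μ (fun ω => f (X₁₁ ω) (h (X₂₁ ω) (X₃₁ ω))) (fun ω => (X₂₁ ω, Q ω)) - condH μ X₃₁ Q ≥
      condH μ (fun ω => f (X₁₁ ω) (h (X₂₁ ω) (X₃₁ ω))) Q - condH μ (fun ω => h (X₂₁ ω) (X₃₁ ω)) Q) ∧
    (condH μ X₂₁ (fun ω => (f (X₁₁ ω) (h (X₂₁ ω) (X₃₁ ω)), Q ω)) ≥
      condH μ X₂₁ (fun ω => (h (X₂₁ ω) (X₃₁ ω), Q ω))) := by
  have i₂₃ := condMI_eq_zero_of_condIndepFun hindep.condIndepFun₂₃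
  have i₁₂₃ := condMI_eq_zero_of_condIndepFun hindep.condIndepFun₁_prod
  have i₁S := condMI_eq_zero_of_condIndepFun
    (hindep.condIndepFun₁_prod.comp_right fun x => h x.1 x.2)
  have i₂S := condMI_nonneg (μ := μ) (A := X₂₁) (B := fun ω => h (X₂₁ ω) (X₃₁ ω))
    (C := fun ω => (f (X₁₁ ω) (h (X₂₁ ω) (X₃₁ ω)), Q ω))
  have r₁ : entH μ (fun ω => ((X₂₁ ω, h (X₂₁ ω) (X₃₁ ω)), f (X₁₁ ω) (h (X₂₁ ω) (X₃₁ ω)), Q ω)) =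
      entH μ (fun ω => ((X₁₁ ω, X₂₁ ω, X₃₁ ω), Q ω)) :=
    entH_congr fun _ _ => by grind [hh.eq_of_eq_left, hf.eq_of_eq_right]
  have r₂ : entH μ (fun ω => (h (X₂₁ ω) (X₃₁ ω), f (X₁₁ ω) (h (X₂₁ ω) (X₃₁ ω)), Q ω)) =
      entH μ (fun ω => ((X₁₁ ω, h (X₂₁ ω) (X₃₁ ω)), Q ω)) :=
    entH_congr fun _ _ => by grind [hf.eq_of_eq_right]
  have r₃ : entH μ (fun ω => (f (X₁₁ ω) (h (X₂₁ ω) (X₃₁ ω)), X₂₁ ω, Q ω)) =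
      entH μ (fun ω => (X₂₁ ω, f (X₁₁ ω) (h (X₂₁ ω) (X₃₁ ω)), Q ω)) :=
    entH_congr fun _ _ => by grind
  have r₄ : entH μ (fun ω => (X₂₁ ω, h (X₂₁ ω) (X₃₁ ω), Q ω)) =
      entH μ (fun ω => ((X₂₁ ω, X₃₁ ω), Q ω)) :=
    entH_congr fun _ _ => by grind [hh.eq_of_eq_left]
  simp only [condMI, condH] at i₂₃ i₁₂₃ i₁S i₂S ⊢
  constructor <;> linarith

/-- `H(Y₁|X₂₁,Q) − H(X₃₁|Q) ≥ H(Y₁|Q) − H(S₁|Q)`;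
equivalently, `H(X₂₁|Y₁,Q) ≥ H(X₂₁|S₁,Q)`. -/
theorem third_term_ge_last
    {Ω 𝒬 𝒜 ℬ 𝒞 𝒮 𝒴 : Type} [Fintype 𝒬] [Nonempty 𝒬] [Fintype 𝒜] [Nonempty 𝒜]
    [Fintype ℬ] [Nonempty ℬ] [Fintype 𝒞] [Nonempty 𝒞] [Fintype 𝒮] [Nonempty 𝒮]
    [Fintype 𝒴] [Nonempty 𝒴]
    (μ : FinPMF Ω) (Q : Ω → 𝒬) (X₁₁ : Ω → 𝒜) (X₂₁ : Ω → ℬ) (X₃₁ : Ω → 𝒞)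
    (h : ℬ → 𝒞 → 𝒮) (f : 𝒜 → 𝒮 → 𝒴)
    (hindep : CondIndepFun3 μ X₁₁ X₂₁ X₃₁ Q)
    (hh : OneToOne h) (hf : OneToOne f) :
    (condH μ (fun ω => f (X₁₁ ω) (h (X₂₁ ω) (X₃₁ ω))) (fun ω => (X₂₁ ω, Q ω)) - condH μ X₃₁ Q ≥
      condH μ (fun ω => f (X₁₁ ω) (h (X₂₁ ω) (X₃₁ ω))) Q - condH μ (fun ω => h (X₂₁ ω) (X₃₁ ω)) Q) ∧
    (condH μ X₂₁ (fun ω => (f (X₁₁ ω) (h (X₂₁ ω) (X₃₁ ω)), Q ω)) ≥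
      condH μ X₂₁ (fun ω => (h (X₂₁ ω) (X₃₁ ω), Q ω))) :=
  third_term_ge_last_general μ Q X₁₁ X₂₁ X₃₁ h f hindep hh hf
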